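/- If L ⊣ J : A ↪ C is a full reflective Q-subcategory of a total Q-category C, then A is total, with left adjoint to Y_A given by L ∘ sup_C ∘ J_!. -/
import Mathlib


/-! Common framework: quantaloids and quantaloid-enriched categories. -/

universe u v w w₂

structure Quantaloid (Obj : Type u) : Type (max u (v + 1)) where
  Hom : Obj → Obj → Type v
  [lat : ∀ S T : Obj, CompleteLattice (Hom S T)]
  comp : ∀ {S T U : Obj}, Hom T U → Hom S T → Hom S U
  one : ∀ S : Obj, Hom S S
  comp_assoc : ∀ {S T U V : Obj} (x : Hom U V) (y : Hom T U) (z : Hom S T),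
    comp (comp x y) z = comp x (comp y z)
  one_comp : ∀ {S T : Obj} (u : Hom S T), comp (one T) u = u
  comp_one : ∀ {S T : Obj} (u : Hom S T), comp u (one S) = u
  comp_sSup : ∀ {S T U : Obj} (v : Hom T U) (s : Set (Hom S T)),
    comp v (sSup s) = ⨆ u ∈ s, comp v u
  sSup_comp : ∀ {S T U : Obj} (s : Set (Hom T U)) (u : Hom S T),
    comp (sSup s) u = ⨆ v ∈ s, comp v u

attribute [instance] Quantaloid.lat

namespace Quantaloid

variable {Obj : Type u} (Q : Quantaloid Obj)

/-- Right extension `w ↙ u`. -/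
def rext {S T U : Obj} (w : Q.Hom S U) (u : Q.Hom S T) : Q.Hom T U :=
  sSup {v : Q.Hom T U | Q.comp v u ≤ w}

/-- Right lifting `v ↘ w`. -/
def rlift {S T U : Obj} (v : Q.Hom T U) (w : Q.Hom S U) : Q.Hom S T :=
  sSup {u : Q.Hom S T | Q.comp v u ≤ w}

/-- Transport of a hom-arrow along equalities of objects. -/
def cast2 {S S' T T' : Obj} (hS : S = S') (hT : T = T') (u : Q.Hom S T) : Q.Hom S' T' := by
  subst hS; subst hT; exact u

variable {Q}

theorem comp_le_comp_left {S T U : Obj} {v v' : Q.Hom T U} (h : v ≤ v') (u : Q.Hom S T) :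
    Q.comp v u ≤ Q.comp v' u := by
  have h2 : (sSup {v, v'} : Q.Hom T U) = v' := by rw [sSup_pair, sup_eq_right.mpr h]
  calc Q.comp v u ≤ ⨆ x ∈ ({v, v'} : Set (Q.Hom T U)), Q.comp x u :=
        le_iSup₂ (f := fun x (_ : x ∈ ({v, v'} : Set (Q.Hom T U))) => Q.comp x u) v (by simp)
  _ = Q.comp v' u := by rw [← Q.sSup_comp, h2]

theorem comp_le_comp_right {S T U : Obj} (v : Q.Hom T U) {u u' : Q.Hom S T} (h : u ≤ u') :
    Q.comp v u ≤ Q.comp v u' := by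
  have h2 : (sSup {u, u'} : Q.Hom S T) = u' := by rw [sSup_pair, sup_eq_right.mpr h]
  calc Q.comp v u ≤ ⨆ x ∈ ({u, u'} : Set (Q.Hom S T)), Q.comp v x :=
        le_iSup₂ (f := fun x (_ : x ∈ ({u, u'} : Set (Q.Hom S T))) => Q.comp v x) u (by simp)
  _ = Q.comp v u' := by rw [← Q.comp_sSup, h2]

theorem le_rext_iff {S T U : Obj} {w : Q.Hom S U} {u : Q.Hom S T} {v : Q.Hom T U} :
    v ≤ Q.rext w u ↔ Q.comp v u ≤ w := by
  constructor
  · intro h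
    refine le_trans (comp_le_comp_left h u) ?_
    rw [Quantaloid.rext, Q.sSup_comp]
    exact iSup₂_le fun x hx => hx
  · intro h; exact le_sSup h

theorem le_rlift_iff {S T U : Obj} {v : Q.Hom T U} {w : Q.Hom S U} {u' : Q.Hom S T} :
    u' ≤ Q.rlift v w ↔ Q.comp v u' ≤ w := by
  constructor
  · intro h
    refine le_trans (comp_le_comp_right v h) ?_
    rw [Quantaloid.rlift, Q.comp_sSup]
    exact iSup₂_le fun x hx => hx
  · intro h; exact le_sSup h

/-- The opposite quantaloid. -/
def op (Q : Quantaloid Obj) : Quantaloid Obj where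
  Hom S T := Q.Hom T S
  lat S T := Q.lat T S
  comp v u := Q.comp u v
  one := Q.one
  comp_assoc x y z := (Q.comp_assoc z y x).symm
  one_comp u := Q.comp_one u
  comp_one u := Q.one_comp u
  comp_sSup v s := Q.sSup_comp s v
  sSup_comp s u := Q.comp_sSup u s

end Quantaloid

/-- A (possibly large) `Q`-category. -/
structure QCat {Obj : Type u} (Q : Quantaloid.{u, v} Obj) : Type (max u v (w + 1)) where
  Ob : Type w
  ext : Ob → Obj
  hom : ∀ X Y : Ob, Q.Hom (ext X) (ext Y)
  id_le : ∀ X : Ob, Q.one (ext X) ≤ hom X X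
  comp_le : ∀ X Y Z : Ob, Q.comp (hom Y Z) (hom X Y) ≤ hom X Z

variable {Obj : Type u} {Q : Quantaloid.{u, v} Obj}

/-- The dual `Q^op`-category. -/
def QCat.op (E : QCat.{u, v, w} Q) : QCat.{u, v, w} Q.op where
  Ob := E.Ob
  ext := E.ext
  hom X Y := E.hom Y X
  id_le X := E.id_le X
  comp_le X Y Z := E.comp_le Z Y X

/-- A (contravariant) presheaf on a `Q`-category. -/
structure Presheaf (E : QCat.{u, v, w} Q) : Type (max u v w) where
  ext : Obj
  arr : ∀ X : E.Ob, Q.Hom (E.ext X) ext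
  compat : ∀ X X' : E.Ob, Q.comp (arr X) (E.hom X' X) ≤ arr X'

/-- A covariant presheaf on a `Q`-category. -/
structure Copresheaf (E : QCat.{u, v, w} Q) : Type (max u v w) where
  ext : Obj
  arr : ∀ X : E.Ob, Q.Hom ext (E.ext X)
  compat : ∀ X X' : E.Ob, Q.comp (E.hom X X') (arr X) ≤ arr X'

/-- Hom-arrows of the presheaf `Q`-category `PE`. -/
def PEhom {E : QCat.{u, v, w} Q} (φ ψ : Presheaf E) : Q.Hom φ.ext ψ.ext :=
  ⨅ X : E.Ob, Q.rext (ψ.arr X) (φ.arr X)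

/-- Hom-arrows of the covariant presheaf `Q`-category `P†E`. -/
def coPEhom {E : QCat.{u, v, w} Q} (ψ ψ' : Copresheaf E) : Q.Hom ψ.ext ψ'.ext :=
  ⨅ X : E.Ob, Q.rlift (ψ'.arr X) (ψ.arr X)

/-- The Yoneda embedding on objects: the representable presheaf. -/
def yonedaP (E : QCat.{u, v, w} Q) (Z : E.Ob) : Presheaf E where
  ext := E.ext Z
  arr X := E.hom X Z
  compat X X' := E.comp_le X' X Z

theorem PE_id_le {E : QCat.{u, v, w} Q} (φ : Presheaf E) : Q.one φ.ext ≤ PEhom φ φ :=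
  le_iInf fun X => Quantaloid.le_rext_iff.mpr (by rw [Q.one_comp])

theorem PE_comp_le {E : QCat.{u, v, w} Q} (φ ψ χ : Presheaf E) :
    Q.comp (PEhom ψ χ) (PEhom φ ψ) ≤ PEhom φ χ :=
  le_iInf fun X => Quantaloid.le_rext_iff.mpr (by
    rw [Q.comp_assoc]
    exact le_trans
      (Quantaloid.comp_le_comp_right (v := PEhom ψ χ) (u' := ψ.arr X)
        (Quantaloid.le_rext_iff.mp (iInf_le _ X)))
      (Quantaloid.le_rext_iff.mp (iInf_le _ X)))

/-- `Y` is a supremum of the presheaf `φ`. -/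
def IsSup (E : QCat.{u, v, w} Q) (φ : Presheaf E) (Y : E.Ob) : Prop :=
  ∃ h : φ.ext = E.ext Y, ∀ Z : E.Ob,
    Q.cast2 h.symm rfl (E.hom Y Z) = ⨅ X : E.Ob, Q.rext (E.hom X Z) (φ.arr X)

/-- Totality: every presheaf has a supremum. -/
def QTotal (E : QCat.{u, v, w} Q) : Prop := ∀ φ : Presheaf E, ∃ Y : E.Ob, IsSup E φ Y

/-- `Y` is a tensor `u ⋆ X`. -/
def IsTensor (E : QCat.{u, v, w} Q) (X : E.Ob) {T : Obj} (u : Q.Hom (E.ext X) T) (Y : E.Ob) : Prop :=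
  ∃ h : T = E.ext Y, ∀ Z : E.Ob,
    Q.cast2 h.symm rfl (E.hom Y Z) = Q.rext (E.hom X Z) u

def Tensored (E : QCat.{u, v, w} Q) : Prop :=
  ∀ (X : E.Ob) (T : Obj) (u : Q.Hom (E.ext X) T), ∃ Y : E.Ob, IsTensor E X u Y

/-- Conical cocompleteness: joins of representables have suprema. -/
def ConicallyCocomplete (E : QCat.{u, v, w} Q) : Prop :=
  ∀ (T : Obj) (ι : Type w) (Y : ι → E.Ob) (e : ∀ i, E.ext (Y i) = T)
    (ψ : Presheaf E) (hψ : ψ.ext = T),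
    (∀ X : E.Ob, ψ.arr X = Q.cast2 rfl hψ.symm (⨆ i, Q.cast2 rfl (e i) (E.hom X (Y i)))) →
    ∃ Y0 : E.Ob, IsSup E ψ Y0

/-- A `Q`-functor. -/
structure QFun (E : QCat.{u, v, w} Q) (D : QCat.{u, v, w₂} Q) : Type (max u w w₂) where
  obj : E.Ob → D.Ob
  ext_eq : ∀ X : E.Ob, E.ext X = D.ext (obj X)
  le_hom : ∀ X Y : E.Ob,
    E.hom X Y ≤ Q.cast2 (ext_eq X).symm (ext_eq Y).symm (D.hom (obj X) (obj Y))

def FullyFaithful {E : QCat.{u, v, w} Q} {D : QCat.{u, v, w₂} Q} (F : QFun E D) : Prop :=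
  ∀ X Y : E.Ob,
    Q.cast2 (F.ext_eq X).symm (F.ext_eq Y).symm (D.hom (F.obj X) (F.obj Y)) = E.hom X Y

/-- A `Q`-distributor. -/
structure QDist (E D : QCat.{u, v, w} Q) : Type (max u v w) where
  d : ∀ (X : E.Ob) (Y : D.Ob), Q.Hom (E.ext X) (D.ext Y)
  compat : ∀ (X X' : E.Ob) (Y Y' : D.Ob),
    Q.comp (D.hom Y Y') (Q.comp (d X Y) (E.hom X' X)) ≤ d X' Y'

/-- The identity distributor of a `Q`-category. -/
def homDist (E : QCat.{u, v, w} Q) : QDist E E where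
  d := E.hom
  compat X X' Y Y' :=
    le_trans (Quantaloid.comp_le_comp_right _ (E.comp_le X' X Y)) (E.comp_le X' Y Y')

/-- The Isbell closure `Φ↓Φ↑φ`, computed pointwise. -/
def isbell {E B : QCat.{u, v, w} Q} (Φ : QDist E B) (φ : Presheaf E) (X : E.Ob) :
    Q.Hom (E.ext X) φ.ext :=
  ⨅ Y : B.Ob, Q.rlift (⨅ X' : E.Ob, Q.rext (Φ.d X' Y) (φ.arr X')) (Φ.d X Y)

/-- The Isbell `Q`-category of a distributor: fixed points of `Φ↓Φ↑`. -/
def ICat {E B : QCat.{u, v, w} Q} (Φ : QDist E B) : QCat.{u, v, max u v w} Q where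
  Ob := {φ : Presheaf E // ∀ X : E.Ob, isbell Φ φ X = φ.arr X}
  ext φ := φ.1.ext
  hom φ ψ := PEhom φ.1 ψ.1
  id_le φ := PE_id_le φ.1
  comp_le φ ψ χ := PE_comp_le φ.1 ψ.1 χ.1

/-- The fibre of a `Q`-category over `T`. -/
def Fib (E : QCat.{u, v, w} Q) (T : Obj) := {X : E.Ob // E.ext X = T}

def fibLE {E : QCat.{u, v, w} Q} {T : Obj} (X Y : Fib E T) : Prop :=
  Q.one T ≤ Q.cast2 X.2 Y.2 (E.hom X.1 Y.1)

def IsFibJoin {E : QCat.{u, v, w} Q} {T : Obj} (s : Set (Fib E T)) (Y : Fib E T) : Prop :=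
  (∀ X ∈ s, fibLE X Y) ∧ ∀ Z : Fib E T, (∀ X ∈ s, fibLE X Z) → fibLE Y Z

def OrderComplete (E : QCat.{u, v, w} Q) : Prop :=
  ∀ (T : Obj) (s : Set (Fib E T)), ∃ Y : Fib E T, IsFibJoin s Y

/-- A right adjoint to a `Q`-functor. -/
structure RAdj {E D : QCat.{u, v, w} Q} (F : QFun E D) : Type (max u w) where
  G : D.Ob → E.Ob
  ext_eq : ∀ Y : D.Ob, D.ext Y = E.ext (G Y)
  functor : ∀ Y Y' : D.Ob,
    D.hom Y Y' ≤ Q.cast2 (ext_eq Y).symm (ext_eq Y').symm (E.hom (G Y) (G Y'))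
  adj : ∀ (X : E.Ob) (Y : D.Ob),
    Q.cast2 rfl (ext_eq Y).symm (E.hom X (G Y)) =
      Q.cast2 (F.ext_eq X).symm rfl (D.hom (F.obj X) Y)

/-- A left adjoint to a `Q`-functor. -/
structure LAdjTo {A C : QCat.{u, v, w} Q} (J : QFun A C) : Type (max u w) where
  L : C.Ob → A.Ob
  ext_eq : ∀ Y : C.Ob, C.ext Y = A.ext (L Y)
  functor : ∀ Y Y' : C.Ob,
    C.hom Y Y' ≤ Q.cast2 (ext_eq Y).symm (ext_eq Y').symm (A.hom (L Y) (L Y'))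
  adj : ∀ (Y : C.Ob) (X : A.Ob),
    Q.cast2 (ext_eq Y).symm rfl (A.hom (L Y) X) =
      Q.cast2 rfl (J.ext_eq X).symm (C.hom Y (J.obj X))

/-- A left adjoint to the Yoneda functor. -/
structure YonedaLAdj (E : QCat.{u, v, w} Q) : Type (max u v w) where
  L : Presheaf E → E.Ob
  ext_eq : ∀ φ : Presheaf E, φ.ext = E.ext (L φ)
  functor : ∀ φ ψ : Presheaf E,
    PEhom φ ψ ≤ Q.cast2 (ext_eq φ).symm (ext_eq ψ).symm (E.hom (L φ) (L ψ))
  adj : ∀ (φ : Presheaf E) (Z : E.Ob),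
    Q.cast2 (ext_eq φ).symm rfl (E.hom (L φ) Z) = PEhom φ (yonedaP E Z)

/-- A left adjoint to `E(X,−) : E → P{|X|}`. -/
structure TensorLAdj (E : QCat.{u, v, w} Q) (X : E.Ob) : Type (max u v w) where
  L : ∀ {T : Obj}, Q.Hom (E.ext X) T → E.Ob
  ext_eq : ∀ {T : Obj} (u : Q.Hom (E.ext X) T), T = E.ext (L u)
  functor : ∀ {T U : Obj} (u : Q.Hom (E.ext X) T) (v : Q.Hom (E.ext X) U),
    Q.rext v u ≤ Q.cast2 (ext_eq u).symm (ext_eq v).symm (E.hom (L u) (L v))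
  adj : ∀ {T : Obj} (u : Q.Hom (E.ext X) T) (Z : E.Ob),
    Q.cast2 (ext_eq u).symm rfl (E.hom (L u) Z) = Q.rext (E.hom X Z) u

/-- A `Q`-functor into the presheaf category `PE`. -/
structure QPFun (C E : QCat.{u, v, w} Q) : Type (max u v w) where
  obj : C.Ob → Presheaf E
  ext_eq : ∀ Z : C.Ob, C.ext Z = (obj Z).ext
  le_hom : ∀ Z Z' : C.Ob,
    C.hom Z Z' ≤ Q.cast2 (ext_eq Z).symm (ext_eq Z').symm (PEhom (obj Z) (obj Z'))

/-- Two objects of a `Q`-category are isomorphic. -/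
def ObIso (B : QCat.{u, v, w} Q) (Y Y' : B.Ob) : Prop :=
  ∃ h : B.ext Y = B.ext Y',
    (Q.one (B.ext Y) ≤ Q.cast2 rfl h.symm (B.hom Y Y')) ∧
    (Q.one (B.ext Y) ≤ Q.cast2 h.symm rfl (B.hom Y' Y))

/-- Equivalence of `Q`-categories. -/
def QEquiv (A : QCat.{u, v, w} Q) (B : QCat.{u, v, w₂} Q) : Prop :=
  ∃ F : QFun A B, FullyFaithful F ∧ ∀ Y : B.Ob, ∃ X : A.Ob, ObIso B (F.obj X) Y

/-- `Y` is the weighted colimit `φ ⋆ J`. -/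
def IsWeightedColim {E : QCat.{u, v, w} Q} {C : QCat.{u, v, w₂} Q} (J : QFun E C) (φ : Presheaf E) (Y : C.Ob) : Prop :=
  ∃ h : φ.ext = C.ext Y, ∀ Z : C.Ob,
    Q.cast2 h.symm rfl (C.hom Y Z) =
      ⨅ X : E.Ob, Q.rext (Q.cast2 (J.ext_eq X).symm rfl (C.hom (J.obj X) Z)) (φ.arr X)

/-- `Y` is the weighted limit `ψ ⤳ J`. -/
def IsWeightedLim {E : QCat.{u, v, w} Q} {C : QCat.{u, v, w₂} Q} (J : QFun E C) (ψ : Copresheaf E) (Y : C.Ob) : Prop :=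
  ∃ h : ψ.ext = C.ext Y, ∀ Z : C.Ob,
    Q.cast2 rfl h.symm (C.hom Z Y) =
      ⨅ X : E.Ob, Q.rlift (ψ.arr X) (Q.cast2 rfl (J.ext_eq X).symm (C.hom Z (J.obj X)))

/-- `HG ≅ F` for `Q`-functors. -/
def CompIso {C D E : QCat.{u, v, w} Q} (G : QFun C D) (H : QFun D E) (F : QFun C E) : Prop :=
  (∀ X : C.Ob, Q.one (C.ext X) ≤
    Q.cast2 ((G.ext_eq X).trans (H.ext_eq (G.obj X))).symm (F.ext_eq X).symm
      (E.hom (H.obj (G.obj X)) (F.obj X))) ∧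
  (∀ X : C.Ob, Q.one (C.ext X) ≤
    Q.cast2 (F.ext_eq X).symm ((G.ext_eq X).trans (H.ext_eq (G.obj X))).symm
      (E.hom (F.obj X) (H.obj (G.obj X))))

section Aux15

variable {Obj : Type u} {Q : Quantaloid.{u, v} Obj}

namespace Quantaloid

theorem cast2_self' {S T : Obj} (p : S = S) (q : T = T) (u : Q.Hom S T) :
    Q.cast2 p q u = u := rfl

theorem cast2_iInf' {ι : Sort*} {S S' T T' : Obj} (hS : S = S') (hT : T = T')
    (f : ι → Q.Hom S T) :
    Q.cast2 hS hT (⨅ i, f i) = ⨅ i, Q.cast2 hS hT (f i) := by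
  subst hS; subst hT; rfl

theorem cast2_rext_right {S T U U' : Obj} (hU : U = U') (w : Q.Hom S U) (u : Q.Hom S T) :
    Q.cast2 rfl hU (Q.rext w u) = Q.rext (Q.cast2 rfl hU w) u := by
  subst hU; rfl

theorem cast2_rext_both {S T T' U U' : Obj} (hT : T = T') (hU : U = U')
    (w : Q.Hom S U) (u : Q.Hom S T) :
    Q.rext (Q.cast2 rfl hU w) (Q.cast2 rfl hT u) = Q.cast2 hT hU (Q.rext w u) := by
  subst hT; subst hU; rfl

theorem cast2_mono' {S S' T T' : Obj} (hS : S = S') (hT : T = T') {u v : Q.Hom S T}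
    (h : u ≤ v) : Q.cast2 hS hT u ≤ Q.cast2 hS hT v := by
  subst hS; subst hT; exact h

theorem cast2_comp_left {S T U U' : Obj} (hU : U = U') (v : Q.Hom T U) (u : Q.Hom S T) :
    Q.comp (Q.cast2 rfl hU v) u = Q.cast2 rfl hU (Q.comp v u) := by
  subst hU; rfl

theorem le_ext15 {α : Type*} [PartialOrder α] {x y : α} (h : ∀ v, v ≤ x ↔ v ≤ y) : x = y :=
  le_antisymm ((h x).mp le_rfl) ((h y).mpr le_rfl)

theorem comp_iSup' {ι : Sort*} {S T U : Obj} (v : Q.Hom T U) (u : ι → Q.Hom S T) :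
    Q.comp v (⨆ i, u i) = ⨆ i, Q.comp v (u i) := by
  rw [iSup, Q.comp_sSup, iSup_range]

theorem iSup_comp' {ι : Sort*} {S T U : Obj} (v : ι → Q.Hom T U) (u : Q.Hom S T) :
    Q.comp (⨆ i, v i) u = ⨆ i, Q.comp (v i) u := by
  rw [iSup, Q.sSup_comp, iSup_range]

theorem rext_comp' {S M T U : Obj} (w : Q.Hom S U) (a : Q.Hom M T) (b : Q.Hom S M) :
    Q.rext w (Q.comp a b) = Q.rext (Q.rext w b) a :=
  le_ext15 fun v => by rw [le_rext_iff, le_rext_iff, le_rext_iff, Q.comp_assoc]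

theorem rext_iSup' {ι : Sort*} {S T U : Obj} (w : Q.Hom S U) (u : ι → Q.Hom S T) :
    Q.rext w (⨆ i, u i) = ⨅ i, Q.rext w (u i) :=
  le_ext15 fun v => by
    simp only [le_rext_iff, le_iInf_iff, comp_iSup', iSup_le_iff]

theorem rext_iInf' {ι : Sort*} {S T U : Obj} (w : ι → Q.Hom S U) (u : Q.Hom S T) :
    Q.rext (⨅ i, w i) u = ⨅ i, Q.rext (w i) u :=
  le_ext15 fun v => by simp only [le_rext_iff, le_iInf_iff]

end Quantaloid

open Quantaloid

theorem rext_yoneda15 (E : QCat.{u, v, w} Q) (P W : E.Ob) :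
    (⨅ Y : E.Ob, Q.rext (E.hom Y W) (E.hom Y P)) = E.hom P W :=
  le_ext15 fun v => by
    simp only [le_iInf_iff, le_rext_iff]
    constructor
    · intro h
      calc v = Q.comp v (Q.one _) := (Q.comp_one v).symm
        _ ≤ Q.comp v (E.hom P P) := comp_le_comp_right v (E.id_le P)
        _ ≤ E.hom P W := h P
    · intro h Y
      exact le_trans (comp_le_comp_left h _) (E.comp_le Y P W)

theorem key15 {A C : QCat.{u, v, w} Q} (J : QFun A C) (hff : FullyFaithful J) (L : LAdjTo J)
    (φ : Presheaf A) (Jφ : Presheaf C) (hext : Jφ.ext = φ.ext)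
    (hJφ : ∀ Y : C.Ob, Jφ.arr Y = Q.cast2 rfl hext.symm
      (⨆ X : A.Ob, Q.comp (φ.arr X) (Q.cast2 rfl (J.ext_eq X).symm (C.hom Y (J.obj X)))))
    (Y0 : C.Ob) (hsup : IsSup C Jφ Y0) : IsSup A φ (L.L Y0) := by
  obtain ⟨h, hY0⟩ := hsup
  obtain ⟨φe, φarr, φcompat⟩ := φ
  obtain ⟨Je, Jarr, Jcompat⟩ := Jφ
  dsimp at hext h hJφ hY0 ⊢
  subst hext
  subst h
  have hJφ' : ∀ Y, Jarr Y =
      ⨆ X : A.Ob, Q.comp (φarr X) (Q.cast2 rfl (J.ext_eq X).symm (C.hom Y (J.obj X))) :=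
    fun Y => (hJφ Y).trans (cast2_self' _ _ _)
  have hY0' : ∀ W, C.hom Y0 W = ⨅ Y, Q.rext (C.hom Y W) (Jarr Y) :=
    fun W => (cast2_self' _ _ _).symm.trans (hY0 W)
  refine ⟨L.ext_eq Y0, fun Z => ?_⟩
  rw [L.adj Y0 Z, hY0' (J.obj Z), cast2_iInf']
  refine Eq.trans (iInf_congr fun Y => ?_)
    (?_ : (⨅ Y : C.Ob, ⨅ X : A.Ob,
      Q.rext (Q.rext (Q.cast2 rfl (J.ext_eq Z).symm (C.hom Y (J.obj Z)))
        (Q.cast2 rfl (J.ext_eq X).symm (C.hom Y (J.obj X)))) (φarr X)) = _)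
  · rw [cast2_rext_right, hJφ' Y, rext_iSup']
    exact iInf_congr fun X => rext_comp' _ _ _
  · rw [iInf_comm]
    refine iInf_congr fun X => ?_
    rw [← rext_iInf']
    congr 1
    calc (⨅ Y : C.Ob, Q.rext (Q.cast2 rfl (J.ext_eq Z).symm (C.hom Y (J.obj Z)))
            (Q.cast2 rfl (J.ext_eq X).symm (C.hom Y (J.obj X))))
        = ⨅ Y : C.Ob, Q.cast2 (J.ext_eq X).symm (J.ext_eq Z).symm
            (Q.rext (C.hom Y (J.obj Z)) (C.hom Y (J.obj X))) :=
          iInf_congr fun Y => cast2_rext_both _ _ _ _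
      _ = Q.cast2 (J.ext_eq X).symm (J.ext_eq Z).symm
            (⨅ Y : C.Ob, Q.rext (C.hom Y (J.obj Z)) (C.hom Y (J.obj X))) :=
          (cast2_iInf' _ _ _).symm
      _ = A.hom X Z := by rw [rext_yoneda15]; exact hff X Z

/-- Left Kan extension of a presheaf along `J`. -/
def pushP15 {A C : QCat.{u, v, w} Q} (J : QFun A C) (φ : Presheaf A) : Presheaf C where
  ext := φ.ext
  arr Y := ⨆ X : A.Ob, Q.comp (φ.arr X) (Q.cast2 rfl (J.ext_eq X).symm (C.hom Y (J.obj X)))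
  compat Y Y' := by
    rw [iSup_comp']
    refine iSup_le fun X => ?_
    refine le_trans (le_of_eq (Q.comp_assoc _ _ _)) ?_
    refine le_trans ?_ (le_iSup _ X)
    refine comp_le_comp_right _ ?_
    rw [cast2_comp_left]
    exact cast2_mono' rfl _ (C.comp_le Y' Y (J.obj X))

end Aux15

theorem stmt15 {Obj : Type u} {Q : Quantaloid.{u, v} Obj} (A C : QCat.{u, v, w} Q) (J : QFun A C)
    (hff : FullyFaithful J) (L : LAdjTo J) (hC : QTotal C) :
    QTotal A ∧
    ∀ (φ : Presheaf A) (Jφ : Presheaf C) (hext : Jφ.ext = φ.ext)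
      (hJφ : ∀ Y : C.Ob, Jφ.arr Y = Q.cast2 rfl hext.symm
        (⨆ X : A.Ob, Q.comp (φ.arr X) (Q.cast2 rfl (J.ext_eq X).symm (C.hom Y (J.obj X)))))
      (Y0 : C.Ob), IsSup C Jφ Y0 → IsSup A φ (L.L Y0) := by
  constructor
  · intro φ
    obtain ⟨Y0, hs⟩ := hC (pushP15 J φ)
    exact ⟨L.L Y0, key15 J hff L φ (pushP15 J φ) rfl (fun Y => rfl) Y0 hs⟩
  · intro φ Jφ hext hJφ Y0 hs
    exact key15 J hff L φ Jφ hext hJφ Y0 hs
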